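/- The Gaussian curvature of the Riemannian metric on {(x,y) : x,y > 0, (e^x−1)(e^y−1) < 4} with first fundamental form E = e^x(e^y−1)/((e^x−1)D), F = 0, G = (e^x−1)e^y/((e^y−1)D), where D = 4e^{x+y}−3e^x−3e^y+2, equals (2e^{x+y}−1)/D, as computed by the Brioschi formula. -/

import Mathlib

open Real

noncomputable def Ddb (x y : ℝ) : ℝ := 4 * exp (x + y) - 3 * exp x - 3 * exp y + 2

noncomputable def Edb (x y : ℝ) : ℝ := exp x * (exp y - 1) / ((exp x - 1) * Ddb x y)

noncomputable def Gdb (x y : ℝ) : ℝ := (exp x - 1) * exp y / ((exp y - 1) * Ddb x y)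

/-!
The metric is symmetric under `x ↔ y` (`E(x, y) = G(y, x)`), so the two terms of the Brioschi
formula are the same function with the variables swapped. With `a = eˣ - 1`, `b = eʸ - 1` one has
`D = 4ab + a + b > 0`, `√(EG) = e^((x+y)/2) / D` and `G_x = e^(x+y) / D²`, so
`G_x / √(EG) = e^((x+y)/2) / D`; differentiating this once more and adding the swapped term leaves
`e^((x+y)/2) (2 - 4e^(x+y)) / D²`, from which the curvature is read off.
-/

variable {x y u : ℝ}

lemma Ddb_comm (x y : ℝ) : Ddb x y = Ddb y x := by
  unfold Ddb; rw [add_comm x y]; ring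

lemma Edb_eq_Gdb_swap (x y : ℝ) : Edb x y = Gdb y x := by
  unfold Edb Gdb; rw [Ddb_comm]; ring

lemma Ddb_pos (hx : 0 < x) (hy : 0 < y) : 0 < Ddb x y := by
  have ha : 0 < exp x - 1 := sub_pos.2 (one_lt_exp_iff.2 hx)
  have hb : 0 < exp y - 1 := sub_pos.2 (one_lt_exp_iff.2 hy)
  have hD : Ddb x y = 4 * (exp x - 1) * (exp y - 1) + (exp x - 1) + (exp y - 1) := by
    unfold Ddb; rw [exp_add]; ring
  rw [hD]; positivity

lemma hasDerivAt_Ddb_left (y u : ℝ) :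
    HasDerivAt (fun v => Ddb v y) (4 * exp (u + y) - 3 * exp u) u := by
  have hexp : HasDerivAt (fun v => exp (v + y)) (exp (u + y)) u := by
    simpa using ((hasDerivAt_id u).add_const y).exp
  exact (((hexp.const_mul 4).sub ((hasDerivAt_exp u).const_mul 3)).sub_const _).add_const _

lemma hasDerivAt_Gdb_left (hy : 0 < y) (hu : 0 < u) :
    HasDerivAt (fun v => Gdb v y) (exp (u + y) / Ddb u y ^ 2) u := by
  have hb : exp y - 1 ≠ 0 := (sub_pos.2 (one_lt_exp_iff.2 hy)).ne'
  have hD : Ddb u y ≠ 0 := (Ddb_pos hu hy).ne'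
  have hquot : HasDerivAt (fun v => Gdb v y) _ u :=
    (((hasDerivAt_exp u).sub_const 1).mul_const (exp y)).div
      ((hasDerivAt_Ddb_left y u).const_mul (exp y - 1)) (mul_ne_zero hb hD)
  refine hquot.congr_deriv ?_
  field_simp
  unfold Ddb
  rw [exp_add]
  ring

lemma sqrt_Edb_mul_Gdb (hu : 0 < u) (hy : 0 < y) :
    √(Edb u y * Gdb u y) = exp ((u + y) / 2) / Ddb u y := by
  have ha : exp u - 1 ≠ 0 := (sub_pos.2 (one_lt_exp_iff.2 hu)).ne'
  have hb : exp y - 1 ≠ 0 := (sub_pos.2 (one_lt_exp_iff.2 hy)).ne'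
  have hD : Ddb u y ≠ 0 := (Ddb_pos hu hy).ne'
  have hEG : Edb u y * Gdb u y = exp (u + y) / Ddb u y ^ 2 := by
    unfold Edb Gdb
    field_simp
    rw [exp_add]
  rw [hEG, sqrt_div' _ (sq_nonneg _), sqrt_sq (Ddb_pos hu hy).le, exp_half]

lemma deriv_Gdb_left_div_sqrt (hu : 0 < u) (hy : 0 < y) :
    deriv (fun v => Gdb v y) u / √(Edb u y * Gdb u y) = exp ((u + y) / 2) / Ddb u y := by
  have hD : Ddb u y ≠ 0 := (Ddb_pos hu hy).ne'
  have hsq : exp (u + y) = exp ((u + y) / 2) ^ 2 := by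
    rw [← exp_nat_mul]; ring_nf
  rw [(hasDerivAt_Gdb_left hy hu).deriv, sqrt_Edb_mul_Gdb hu hy, hsq]
  field_simp

lemma deriv_brioschi_term (hx : 0 < x) (hy : 0 < y) :
    deriv (fun u => deriv (fun v => Gdb v y) u / √(Edb u y * Gdb u y)) x =
      exp ((x + y) / 2) * (Ddb x y / 2 - (4 * exp (x + y) - 3 * exp x)) / Ddb x y ^ 2 := by
  have hloc : (fun u => deriv (fun v => Gdb v y) u / √(Edb u y * Gdb u y))
      =ᶠ[nhds x] fun u => exp ((u + y) / 2) / Ddb u y := by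
    filter_upwards [eventually_gt_nhds hx] with u hu
    exact deriv_Gdb_left_div_sqrt hu hy
  have hhalf : HasDerivAt (fun v => exp ((v + y) / 2)) (exp ((x + y) / 2) * (1 / 2)) x := by
    simpa using (((hasDerivAt_id x).add_const y).div_const 2).exp
  have hquot : HasDerivAt (fun u => exp ((u + y) / 2) / Ddb u y) _ x :=
    hhalf.div (hasDerivAt_Ddb_left y x) (Ddb_pos hx hy).ne'
  rw [hloc.deriv_eq, hquot.deriv]
  ring

theorem dumbbell_brioschi_curvature_general (x y : ℝ) (hx : 0 < x) (hy : 0 < y) :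
    -(1 / (2 * Real.sqrt (Edb x y * Gdb x y))) *
        (deriv (fun u => deriv (fun v => Gdb v y) u / Real.sqrt (Edb u y * Gdb u y)) x +
         deriv (fun u => deriv (fun v => Edb x v) u / Real.sqrt (Edb x u * Gdb x u)) y) =
      (2 * exp (x + y) - 1) / Ddb x y := by
  have hswap : (fun u => deriv (fun v => Edb x v) u / √(Edb x u * Gdb x u)) =
      fun u => deriv (fun v => Gdb v x) u / √(Edb u x * Gdb u x) := by
    simp only [Edb_eq_Gdb_swap x, ← Edb_eq_Gdb_swap _ x, mul_comm (Gdb _ x)]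
  rw [hswap, deriv_brioschi_term hx hy, deriv_brioschi_term hy hx, sqrt_Edb_mul_Gdb hx hy,
    Ddb_comm y x, add_comm y x]
  have hD : Ddb x y ≠ 0 := (Ddb_pos hx hy).ne'
  have hc : exp ((x + y) / 2) ≠ 0 := (exp_pos _).ne'
  field_simp
  unfold Ddb
  ring

theorem dumbbell_brioschi_curvature (x y : ℝ) (hx : 0 < x) (hy : 0 < y)
    (hdom : (exp x - 1) * (exp y - 1) < 4) :
    -(1 / (2 * Real.sqrt (Edb x y * Gdb x y))) *
        (deriv (fun u => deriv (fun v => Gdb v y) u / Real.sqrt (Edb u y * Gdb u y)) x +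
         deriv (fun u => deriv (fun v => Edb x v) u / Real.sqrt (Edb x u * Gdb x u)) y) =
      (2 * exp (x + y) - 1) / Ddb x y :=
  dumbbell_brioschi_curvature_general x y hx hy
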